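/- Let S ⊂ ℝ^n be an n-dimensional simplex (the convex hull of n+1 affinely independent points) and let χ_S be its characteristic function. Then ∫_{ℝ^n} Δ_{−∞} χ_S (z) dz = 2^{−n} · C(2n, n) · V_n(S), where C(2n, n) denotes the binomial coefficient (2n choose n) and V_n is the n-dimensional Lebesgue measure. -/

import Mathlib

open MeasureTheory Set
open scoped ENNReal Classical

/-- The `(−∞)`-difference function of `f`:
`Δ_{−∞} f(z) = sup { min(f(x), f(−y)) : (x+y)/2 = z }`, valued in `[0,∞]`. -/
noncomputable def diffNegInf {n : ℕ} (f : (Fin n → ℝ) → ℝ) (z : Fin n → ℝ) : ℝ≥0∞ :=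
  sSup {r : ℝ≥0∞ | ∃ x y : Fin n → ℝ, (1 / 2 : ℝ) • (x + y) = z ∧
    r = ENNReal.ofReal (min (f x) (f (-y)))}

/-! The function `Δ_{−∞} χ_S` is the indicator of `½ (S − S)`, so the integral is
`2^{−n} V(S − S)`. Every simplex is an affine image of the corner simplex
`Δ = {x ≥ 0, ∑ xᵢ ≤ 1}`, and affine maps scale `V(S − S)` and `V(S)` by the same factor, so it
suffices to show `V(Δ − Δ) = C(2n, n) V(Δ)`. A point lies in `Δ − Δ` iff its positive and negative
parts lie in `Δ`; on the closed orthant where the coordinates in `A` are `≥ 0` and the others `≤ 0`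
this makes `Δ − Δ` the product of a corner simplex of dimension `|A|` and the negative of one of
dimension `n − |A|`, of volume `1 / (|A|! (n − |A|)!)`. Summing over `A` gives
`∑ₖ C(n, k)² / n! = C(2n, n) / n!`. -/

open scoped Pointwise

lemma lintegral_Icc_one_sub_pow (n : ℕ) :
    ∫⁻ t in Icc (0 : ℝ) 1, ENNReal.ofReal ((1 - t) ^ n) = ENNReal.ofReal (1 / (n + 1)) := by
  rw [← ofReal_integral_eq_lintegral_ofReal, integral_Icc_eq_integral_Ioc,
    ← intervalIntegral.integral_of_le zero_le_one,
    intervalIntegral.integral_comp_sub_left (fun x => x ^ n), integral_pow]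
  · norm_num
  · exact (by fun_prop : Continuous fun t : ℝ => (1 - t) ^ n).integrableOn_Icc
  · filter_upwards [ae_restrict_mem measurableSet_Icc] with t ht
    exact pow_nonneg (sub_nonneg.2 ht.2) n

section CornerSimplex

variable {ι : Type*} [Fintype ι]

def cornerSimplex (ι : Type*) [Fintype ι] : Set (ι → ℝ) :=
  {x | (∀ i, 0 ≤ x i) ∧ ∑ i, x i ≤ 1}

lemma isClosed_cornerSimplex : IsClosed (cornerSimplex ι) := by
  simp only [cornerSimplex, ofPred_and, ofPred_forall]
  exact (isClosed_iInter fun i => isClosed_le continuous_const (continuous_apply i)).inter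
    (isClosed_le (continuous_finsetSum _ fun i _ => continuous_apply i) continuous_const)

lemma convex_cornerSimplex : Convex ℝ (cornerSimplex ι) := by
  rintro x ⟨hx0, hx1⟩ y ⟨hy0, hy1⟩ a b ha hb hab
  refine ⟨fun i => add_nonneg (mul_nonneg ha (hx0 i)) (mul_nonneg hb (hy0 i)), ?_⟩
  simp only [Pi.add_apply, Pi.smul_apply, smul_eq_mul, Finset.sum_add_distrib, ← Finset.mul_sum]
  nlinarith

lemma zero_mem_cornerSimplex : (0 : ι → ℝ) ∈ cornerSimplex ι :=
  ⟨fun _ => le_rfl, by simp⟩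

lemma smul_cornerSimplex {a : ℝ} (ha : 0 ≤ a) :
    a • cornerSimplex ι = {x | (∀ i, 0 ≤ x i) ∧ ∑ i, x i ≤ a} := by
  ext x
  constructor
  · rintro ⟨y, ⟨hy0, hy1⟩, rfl⟩
    refine ⟨fun i => mul_nonneg ha (hy0 i), ?_⟩
    simp only [Pi.smul_apply, smul_eq_mul, ← Finset.mul_sum]
    nlinarith
  · rintro ⟨hx0, hx1⟩
    rcases ha.eq_or_lt with rfl | ha
    · have hx : x = 0 := funext ((Finset.sum_eq_zero_iff_of_nonneg fun i _ => hx0 i).1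
        (hx1.antisymm (Finset.sum_nonneg fun i _ => hx0 i)) · (Finset.mem_univ _))
      exact ⟨0, zero_mem_cornerSimplex, by simp [hx]⟩
    refine ⟨a⁻¹ • x, ⟨fun i => mul_nonneg (inv_nonneg.2 ha.le) (hx0 i), ?_⟩,
      smul_inv_smul₀ ha.ne' x⟩
    simp only [Pi.smul_apply, smul_eq_mul, ← Finset.mul_sum]
    rwa [inv_mul_le_iff₀ ha, mul_one]

lemma volume_setOf_sum_le {a : ℝ} (ha : 0 ≤ a) :
    volume {x : ι → ℝ | (∀ i, 0 ≤ x i) ∧ ∑ i, x i ≤ a} =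
      ENNReal.ofReal (a ^ Fintype.card ι) * volume (cornerSimplex ι) := by
  rw [← smul_cornerSimplex ha, Measure.addHaar_smul, Module.finrank_fintype_fun_eq_card,
    abs_of_nonneg (pow_nonneg ha _)]

lemma volume_cornerSimplex_succ (n : ℕ) :
    volume (cornerSimplex (Fin (n + 1))) =
      ENNReal.ofReal (1 / (n + 1)) * volume (cornerSimplex (Fin n)) := by
  -- Fubini along the first coordinate: the slice at height `t ∈ [0, 1]` is `(1 - t) • Δ`.
  let B : Set (ℝ × (Fin n → ℝ)) := {q | 0 ≤ q.1 ∧ (∀ i, 0 ≤ q.2 i) ∧ q.1 + ∑ i, q.2 i ≤ 1}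
  have hB :
      cornerSimplex (Fin (n + 1)) = MeasurableEquiv.piFinSuccAbove (fun _ => ℝ) 0 ⁻¹' B := by
    ext x
    simp [cornerSimplex, B, Fin.sum_univ_succ, Fin.forall_fin_succ, Fin.tail, and_assoc]
  have hBm : MeasurableSet B := by measurability
  have hslice (t : ℝ) : volume (Prod.mk t ⁻¹' B) = (Icc 0 1).indicator
      (fun t => ENNReal.ofReal ((1 - t) ^ n) * volume (cornerSimplex (Fin n))) t := by
    by_cases ht : t ∈ Icc (0 : ℝ) 1
    · rw [indicator_of_mem ht]
      refine (congrArg volume ?_).trans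
        ((volume_setOf_sum_le (sub_nonneg.2 ht.2)).trans (by rw [Fintype.card_fin]))
      ext y
      simp only [B, mem_preimage, mem_ofPred_eq, ht.1, true_and]
      constructor <;> rintro ⟨h0, h1⟩ <;> exact ⟨h0, by linarith⟩
    · rw [indicator_of_notMem ht, measure_eq_zero_iff_ae_notMem]
      refine ae_of_all _ fun y ⟨h0, hy, h1⟩ => ht ⟨h0, ?_⟩
      linarith [Finset.sum_nonneg fun i (_ : i ∈ Finset.univ) => hy i]
  rw [hB,
    (volume_preserving_piFinSuccAbove (fun _ => ℝ) 0).measure_preimage hBm.nullMeasurableSet,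
    Measure.volume_eq_prod, Measure.prod_apply hBm, lintegral_congr hslice,
    lintegral_indicator measurableSet_Icc, lintegral_mul_const _ (by fun_prop),
    lintegral_Icc_one_sub_pow]

lemma volume_cornerSimplex_fin (n : ℕ) :
    volume (cornerSimplex (Fin n)) = ENNReal.ofReal (1 / n.factorial) := by
  induction n with
  | zero => simp [cornerSimplex, volume_pi]
  | succ n ih =>
    rw [volume_cornerSimplex_succ, ih, ← ENNReal.ofReal_mul (by positivity), Nat.factorial_succ]
    congr 1
    push_cast
    field_simp

lemma preimage_piCongrLeft_cornerSimplex {κ : Type*} [Fintype κ] (e : κ ≃ ι) :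
    MeasurableEquiv.piCongrLeft (fun _ => ℝ) e ⁻¹' cornerSimplex ι = cornerSimplex κ := by
  ext x
  simp only [cornerSimplex, mem_preimage, mem_ofPred_eq, ← e.forall_congr_right, ← e.sum_comp,
    MeasurableEquiv.piCongrLeft_apply_apply]

lemma volume_cornerSimplex :
    volume (cornerSimplex ι) = ENNReal.ofReal (1 / (Fintype.card ι).factorial) := by
  rw [← volume_cornerSimplex_fin, ← preimage_piCongrLeft_cornerSimplex (Fintype.equivFin ι).symm]
  exact ((volume_measurePreserving_piCongrLeft (fun _ => ℝ) _).measure_preimage_equiv _).symm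

lemma mem_cornerSimplex_of_le {x y : ι → ℝ} (hx : 0 ≤ x) (hxy : x ≤ y)
    (hy : y ∈ cornerSimplex ι) : x ∈ cornerSimplex ι :=
  ⟨hx, (Finset.sum_le_sum fun i _ => hxy i).trans hy.2⟩

lemma mem_cornerSimplex_sub_self {x : ι → ℝ} :
    x ∈ cornerSimplex ι - cornerSimplex ι ↔ x⁺ ∈ cornerSimplex ι ∧ x⁻ ∈ cornerSimplex ι := by
  constructor
  · rintro ⟨a, ha, b, hb, rfl⟩
    refine ⟨mem_cornerSimplex_of_le (posPart_nonneg _) (sup_le (sub_le_self _ hb.1) ha.1) ha,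
      mem_cornerSimplex_of_le (negPart_nonneg _) (sup_le ?_ hb.1) hb⟩
    rw [neg_sub]
    exact sub_le_self _ ha.1
  · rintro ⟨h1, h2⟩
    exact ⟨_, h1, _, h2, posPart_sub_negPart x⟩

end CornerSimplex

lemma sum_range_choose_mul_inv_factorial_mul_factorial (k : ℕ) :
    ∑ m ∈ Finset.range (k + 1), (k.choose m : ℝ) * (1 / (m.factorial * (k - m).factorial)) =
      (2 * k).choose k / k.factorial := by
  have hterm : ∀ m ∈ Finset.range (k + 1),
      (k.choose m : ℝ) * (1 / (m.factorial * (k - m).factorial)) =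
        ((k.choose m ^ 2 : ℕ) : ℝ) / k.factorial := by
    intro m hm
    rw [← Nat.choose_mul_factorial_mul_factorial (Nat.lt_succ_iff.1 (Finset.mem_range.1 hm))]
    push_cast
    field_simp
  rw [Finset.sum_congr rfl hterm, ← Finset.sum_div, ← Nat.cast_sum, Nat.sum_range_choose_sq]

section Orthant

variable {ι : Type*} [Fintype ι]

lemma volume_setOf_apply_eq_zero (i : ι) : volume {x : ι → ℝ | x i = 0} = 0 := by
  refine Measure.addHaar_submodule volume
    (LinearMap.ker (LinearMap.proj (R := ℝ) (φ := fun _ : ι => ℝ) i)) fun h => ?_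
  have : Pi.single i (1 : ℝ) ∈ LinearMap.ker (LinearMap.proj (R := ℝ) (φ := fun _ : ι => ℝ) i) :=
    h ▸ Submodule.mem_top
  simp at this

def orthant (p : ι → Prop) : Set (ι → ℝ) :=
  {x | (∀ i, p i → 0 ≤ x i) ∧ ∀ i, ¬p i → x i ≤ 0}

lemma iUnion_orthant_mem [DecidableEq ι] : ⋃ A : Finset ι, orthant (· ∈ A) = univ := by
  refine eq_univ_of_forall fun x => mem_iUnion.2 ⟨Finset.univ.filter (0 ≤ x ·), ?_, ?_⟩
  · intro i hi
    exact (Finset.mem_filter.1 hi).2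
  · intro i hi
    exact (not_le.1 (by simpa using hi)).le

lemma aedisjoint_orthant_mem {A B : Finset ι} (h : A ≠ B) :
    AEDisjoint volume (orthant (· ∈ A)) (orthant (· ∈ B)) := by
  obtain ⟨i, hi⟩ : ∃ i, ¬(i ∈ A ↔ i ∈ B) := not_forall.1 (mt Finset.ext h)
  refine measure_mono_null (fun x ⟨hxA, hxB⟩ => ?_) (volume_setOf_apply_eq_zero i)
  by_cases hA : i ∈ A
  · exact le_antisymm (hxB.2 i (by tauto)) (hxA.1 i hA)
  · exact le_antisymm (hxA.2 i hA) (hxB.1 i (by tauto))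

section Pieces

variable {p : ι → Prop} [DecidablePred p]

lemma sum_posPart_of_mem_orthant {x : ι → ℝ} (hx : x ∈ orthant p) :
    ∑ i, (x i)⁺ = ∑ j : {i // p i}, x j := by
  rw [← Fintype.sum_subtype_add_sum_subtype p,
    Fintype.sum_eq_zero (fun j : {i // ¬p i} => (x j)⁺) fun j => posPart_eq_zero.2 (hx.2 _ j.2),
    add_zero]
  exact Fintype.sum_congr _ _ fun j => posPart_eq_self.2 (hx.1 _ j.2)

lemma sum_negPart_of_mem_orthant {x : ι → ℝ} (hx : x ∈ orthant p) :
    ∑ i, (x i)⁻ = ∑ j : {i // ¬p i}, -x j := by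
  rw [← Fintype.sum_subtype_add_sum_subtype p,
    Fintype.sum_eq_zero (fun j : {i // p i} => (x j)⁻) fun j => negPart_eq_zero.2 (hx.1 _ j.2),
    zero_add]
  exact Fintype.sum_congr _ _ fun j => negPart_eq_neg.2 (hx.2 _ j.2)

lemma cornerSimplex_sub_self_inter_orthant :
    (cornerSimplex ι - cornerSimplex ι) ∩ orthant p =
      MeasurableEquiv.piEquivPiSubtypeProd (fun _ => ℝ) p ⁻¹'
        (cornerSimplex {i // p i} ×ˢ (-cornerSimplex {i // ¬p i})) := by
  ext x
  rw [mem_inter_iff, mem_cornerSimplex_sub_self]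
  simp only [mem_preimage, mem_prod, mem_neg, cornerSimplex, mem_ofPred_eq,
    MeasurableEquiv.piEquivPiSubtypeProd_apply, Pi.neg_apply, Pi.posPart_apply, Pi.negPart_apply]
  constructor
  · rintro ⟨⟨⟨-, h1⟩, -, h2⟩, hx⟩
    exact ⟨⟨fun j => hx.1 j j.2, sum_posPart_of_mem_orthant hx ▸ h1⟩,
      fun j => neg_nonneg.2 (hx.2 j j.2), sum_negPart_of_mem_orthant hx ▸ h2⟩
  · rintro ⟨⟨hp0, h1⟩, hnp0, h2⟩
    have hx : x ∈ orthant p := ⟨fun i hi => hp0 ⟨i, hi⟩, fun i hi => neg_nonneg.1 (hnp0 ⟨i, hi⟩)⟩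
    exact ⟨⟨⟨fun i => posPart_nonneg _, (sum_posPart_of_mem_orthant hx).symm ▸ h1⟩,
      fun i => negPart_nonneg _, (sum_negPart_of_mem_orthant hx).symm ▸ h2⟩, hx⟩

lemma volume_cornerSimplex_sub_self_inter_orthant :
    volume ((cornerSimplex ι - cornerSimplex ι) ∩ orthant p) = ENNReal.ofReal
      (1 / ((Fintype.card {i // p i}).factorial * (Fintype.card {i // ¬p i}).factorial)) := by
  rw [cornerSimplex_sub_self_inter_orthant,
    (volume_preserving_piEquivPiSubtypeProd _ _).measure_preimage_equiv, Measure.volume_eq_prod,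
    Measure.prod_prod, Measure.measure_neg, volume_cornerSimplex, volume_cornerSimplex,
    ← ENNReal.ofReal_mul (by positivity), one_div_mul_one_div]

lemma measurableSet_cornerSimplex_sub_self_inter_orthant :
    MeasurableSet ((cornerSimplex ι - cornerSimplex ι) ∩ orthant p) := by
  rw [cornerSimplex_sub_self_inter_orthant]
  exact (MeasurableEquiv.measurableSet_preimage _).2
    (isClosed_cornerSimplex.measurableSet.prod isClosed_cornerSimplex.measurableSet.neg)

end Pieces

lemma volume_cornerSimplex_sub_self [DecidableEq ι] :
    volume (cornerSimplex ι - cornerSimplex ι) = ENNReal.ofReal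
      ((2 * Fintype.card ι).choose (Fintype.card ι) / (Fintype.card ι).factorial) := by
  have hcover : cornerSimplex ι - cornerSimplex ι =
      ⋃ A : Finset ι, (cornerSimplex ι - cornerSimplex ι) ∩ orthant (· ∈ A) := by
    rw [← inter_iUnion, iUnion_orthant_mem, inter_univ]
  rw [hcover, measure_iUnion₀ (fun A B h => (aedisjoint_orthant_mem h).mono inter_subset_right
    inter_subset_right) fun A =>
    measurableSet_cornerSimplex_sub_self_inter_orthant.nullMeasurableSet, tsum_fintype]
  simp_rw [volume_cornerSimplex_sub_self_inter_orthant, Fintype.card_subtype_compl,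
    Fintype.card_eq_nat_card (α := {i // i ∈ _}), Nat.card_eq_finsetCard]
  rw [← ENNReal.ofReal_sum_of_nonneg fun _ _ => by positivity, ← Finset.powerset_univ,
    Finset.sum_powerset_apply_card (fun m => 1 / ((m.factorial : ℝ) *
      (Fintype.card ι - m).factorial)), Finset.card_univ]
  simp_rw [nsmul_eq_mul, sum_range_choose_mul_inv_factorial_mul_factorial]

end Orthant

section ConvexHull

variable {n : ℕ}

def cornerVertex (n : ℕ) : Fin (n + 1) → Fin n → ℝ :=
  Fin.cons 0 fun i => Pi.single i 1

lemma convexHull_range_cornerVertex :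
    convexHull ℝ (range (cornerVertex n)) = cornerSimplex (Fin n) := by
  refine (convexHull_min ?_ convex_cornerSimplex).antisymm fun x hx => ?_
  · rintro _ ⟨i, rfl⟩
    induction i using Fin.cases with
    | zero => exact zero_mem_cornerSimplex
    | succ j =>
      refine ⟨fun i => ?_, by simp [cornerVertex]⟩
      simp only [cornerVertex, Fin.cons_succ, Pi.single_apply]
      split_ifs <;> norm_num
  · let w : Fin (n + 1) → ℝ := Fin.cons (1 - ∑ i, x i) x
    have hw0 : ∀ i ∈ Finset.univ, 0 ≤ w i := fun i _ => by
      induction i using Fin.cases with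
      | zero => simpa [w] using hx.2
      | succ j => simpa [w] using hx.1 j
    have hw1 : ∑ i, w i = 1 := by simp [w, Fin.sum_univ_succ]
    convert (convex_convexHull ℝ _).sum_mem hw0 hw1 fun i _ =>
      subset_convexHull ℝ _ (mem_range_self i)
    simpa [w, cornerVertex, Fin.sum_univ_succ] using pi_eq_sum_univ' x

variable {E : Type*} [AddCommGroup E] [Module ℝ E]

lemma convexHull_range_eq_vadd_image_cornerSimplex (p : Fin (n + 1) → E) :
    convexHull ℝ (range p) =
      p 0 +ᵥ Fintype.linearCombination ℝ (fun i => p i.succ - p 0) '' cornerSimplex (Fin n) := by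
  have hp : p =
      (p 0 +ᵥ ·) ∘ Fintype.linearCombination ℝ (fun i => p i.succ - p 0) ∘ cornerVertex n := by
    funext i
    induction i using Fin.cases with
    | zero => simp [cornerVertex]
    | succ j => simp [cornerVertex]
  conv_lhs => rw [hp]
  rw [range_comp, range_comp, image_vadd, convexHull_vadd, ← LinearMap.image_convexHull,
    convexHull_range_cornerVertex]

end ConvexHull

lemma volume_convexHull_sub_self {n : ℕ} (p : Fin (n + 1) → Fin n → ℝ) :
    volume (convexHull ℝ (range p) - convexHull ℝ (range p)) =
      (2 * n).choose n * volume (convexHull ℝ (range p)) := by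
  rw [convexHull_range_eq_vadd_image_cornerSimplex, vadd_sub_vadd_comm, sub_self, zero_vadd,
    ← Set.image_sub, measure_vadd, Measure.addHaar_image_linearMap,
    Measure.addHaar_image_linearMap, volume_cornerSimplex_sub_self, volume_cornerSimplex,
    Fintype.card_fin, mul_left_comm, div_eq_mul_one_div, ENNReal.ofReal_mul (by positivity),
    ENNReal.ofReal_natCast]

lemma diffNegInf_indicator {n : ℕ} (S : Set (Fin n → ℝ)) :
    diffNegInf (fun x => if x ∈ S then (1 : ℝ) else 0) = ((1 / 2 : ℝ) • (S - S)).indicator 1 := by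
  have hval (x y : Fin n → ℝ) :
      ENNReal.ofReal (min (if x ∈ S then (1 : ℝ) else 0) (if -y ∈ S then 1 else 0)) =
        if x ∈ S ∧ -y ∈ S then 1 else 0 := by
    split_ifs <;> simp_all
  have hmem (z : Fin n → ℝ) : z ∈ (1 / 2 : ℝ) • (S - S) ↔
      ∃ x y : Fin n → ℝ, (1 / 2 : ℝ) • (x + y) = z ∧ x ∈ S ∧ -y ∈ S := by
    constructor
    · rintro ⟨_, ⟨x, hx, y, hy, rfl⟩, rfl⟩
      exact ⟨x, -y, by simp [sub_eq_add_neg], hx, by rwa [neg_neg]⟩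
    · rintro ⟨x, y, rfl, hx, hy⟩
      exact ⟨x - -y, ⟨x, hx, -y, hy, rfl⟩, by rw [sub_neg_eq_add]⟩
  funext z
  simp only [diffNegInf, hval]
  refine le_antisymm (sSup_le ?_) ?_
  · rintro _ ⟨x, y, hz, rfl⟩
    split_ifs with h
    · rw [indicator_of_mem ((hmem z).2 ⟨x, y, hz, h⟩), Pi.one_apply]
    · exact zero_le
  · by_cases hz : z ∈ (1 / 2 : ℝ) • (S - S)
    · obtain ⟨x, y, hxy, hS⟩ := (hmem z).1 hz
      rw [indicator_of_mem hz]
      exact le_sSup ⟨x, y, hxy, (if_pos hS).symm⟩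
    · rw [indicator_of_notMem hz]
      exact zero_le

theorem lintegral_diffNegInf_simplex_general {n : ℕ} (p : Fin (n + 1) → (Fin n → ℝ)) :
    ∫⁻ z, diffNegInf
        (fun x => if x ∈ convexHull ℝ (Set.range p) then (1 : ℝ) else 0) z =
      (2 ^ n : ℝ≥0∞)⁻¹ * (Nat.choose (2 * n) n : ℝ≥0∞) *
        volume (convexHull ℝ (Set.range p)) := by
  have hS : IsCompact (convexHull ℝ (range p)) := (finite_range p).isCompact_convexHull ℝ
  have hSS : IsCompact (convexHull ℝ (range p) - convexHull ℝ (range p)) := by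
    simpa only [sub_eq_add_neg] using hS.add hS.neg
  rw [diffNegInf_indicator, lintegral_indicator_one (hSS.smul (1 / 2 : ℝ)).measurableSet,
    Measure.addHaar_smul, volume_convexHull_sub_self, Module.finrank_fin_fun, ← mul_assoc,
    abs_of_pos (by positivity), ENNReal.ofReal_pow (by norm_num), one_div,
    ENNReal.ofReal_inv_of_pos two_pos, ENNReal.ofReal_ofNat, ENNReal.inv_pow]

/-- For an `n`-dimensional simplex `S ⊆ ℝⁿ` (the convex hull of `n+1` affinely
independent points), `∫ Δ_{−∞} χ_S = 2^{−n} (2n choose n) V_n(S)`. -/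
theorem lintegral_diffNegInf_simplex {n : ℕ} (p : Fin (n + 1) → (Fin n → ℝ))
    (hp : AffineIndependent ℝ p) :
    ∫⁻ z, diffNegInf
        (fun x => if x ∈ convexHull ℝ (Set.range p) then (1 : ℝ) else 0) z =
      (2 ^ n : ℝ≥0∞)⁻¹ * (Nat.choose (2 * n) n : ℝ≥0∞) *
        volume (convexHull ℝ (Set.range p)) :=
  lintegral_diffNegInf_simplex_general p
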